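/- arXiv:1507.01385 — 5 statements merged into one kernel-verified Lean document; each statement's English description precedes it below -/
import Mathlib

section
/- Let R be an associative unital (not necessarily commutative) ring and I a two-sided ideal of R, and let k ≥ 0 be an integer. If u is a unit of R with (u : R) − 1 ∈ I^(k+1), and x ∈ R satisfies x − 1 ∈ I^k, then u·x·u⁻¹ − x ∈ I^(2k+1). -/
/-- The `m`-th power of a two-sided ideal `I` of a ring `R`, with `I ^ 0 = R` and
`I ^ (n+1)` the two-sided ideal generated by products `a * b` with `a ∈ I`, `b ∈ I ^ n`. -/
protected def TwoSidedIdeal.npow {R : Type*} [Ring R] (I : TwoSidedIdeal R) : ℕ → TwoSidedIdeal R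
  | 0 => ⊤
  | n + 1 => TwoSidedIdeal.span {x | ∃ a ∈ I, ∃ b ∈ TwoSidedIdeal.npow I n, x = a * b}

instance {R : Type*} [Ring R] : Pow (TwoSidedIdeal R) ℕ :=
  ⟨fun I n => TwoSidedIdeal.npow I n⟩

/-!
Write `u = 1 + a` and `x = 1 + b` with `a ∈ I ^ (k+1)` and `b ∈ I ^ k`. The commutator
`u * x - x * u = a * b - b * a` lies in `I ^ (2k+1)`, and multiplying on the right by `u⁻¹`
turns it into `u * x * u⁻¹ - x`.
-/

namespace TwoSidedIdeal

variable {R : Type*} [Ring R]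

lemma mul_mem_of_mem_span {s : Set R} {K L : TwoSidedIdeal R}
    (hs : ∀ a ∈ s, ∀ c ∈ K, a * c ∈ L) {a c : R} (ha : a ∈ span s) (hc : c ∈ K) :
    a * c ∈ L := by
  induction ha using span_induction generalizing c with
  | mem a ha => exact hs a ha c hc
  | zero => simp
  | add a b _ _ iha ihb => simpa [add_mul] using L.add_mem (iha hc) (ihb hc)
  | neg a _ iha => simpa [neg_mul] using L.neg_mem (iha hc)
  | left_absorb y a _ iha => simpa [mul_assoc] using L.mul_mem_left y _ (iha hc)
  | right_absorb y a _ iha => simpa [mul_assoc] using iha (K.mul_mem_left y c hc)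

lemma mul_mem_pow_succ (I : TwoSidedIdeal R) {n : ℕ} {a b : R} (ha : a ∈ I) (hb : b ∈ I ^ n) :
    a * b ∈ I ^ (n + 1) :=
  subset_span ⟨a, ha, b, hb, rfl⟩

lemma mul_mem_pow_add (I : TwoSidedIdeal R) {m n : ℕ} {a b : R} (ha : a ∈ I ^ m)
    (hb : b ∈ I ^ n) : a * b ∈ I ^ (m + n) := by
  induction m generalizing a b with
  | zero => simpa using (I ^ n).mul_mem_left a b hb
  | succ m ih =>
    refine mul_mem_of_mem_span (K := I ^ n) ?_ ha hb
    rintro _ ⟨p, hp, q, hq, rfl⟩ c hc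
    rw [mul_assoc, Nat.add_right_comm]
    exact I.mul_mem_pow_succ hp (ih hq hc)

lemma mul_sub_mul_comm_mem_pow (I : TwoSidedIdeal R) {m n : ℕ} {a b : R}
    (ha : a - 1 ∈ I ^ m) (hb : b - 1 ∈ I ^ n) : a * b - b * a ∈ I ^ (m + n) := by
  have hab := I.mul_mem_pow_add ha hb
  have hba := I.mul_mem_pow_add hb ha
  rw [Nat.add_comm n m] at hba
  have key : (a - 1) * (b - 1) - (b - 1) * (a - 1) = a * b - b * a := by noncomm_ring
  simpa only [key] using (I ^ (m + n)).sub_mem hab hba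

lemma units_conj_sub_mem_pow (I : TwoSidedIdeal R) {m n : ℕ} {u : Rˣ} {x : R}
    (hu : (u : R) - 1 ∈ I ^ m) (hx : x - 1 ∈ I ^ n) :
    (u : R) * x * (↑u⁻¹ : R) - x ∈ I ^ (m + n) := by
  have key : ((u : R) * x - x * u) * (↑u⁻¹ : R) = (u : R) * x * (↑u⁻¹ : R) - x := by
    rw [sub_mul, mul_assoc x, Units.mul_inv, mul_one]
  simpa only [key] using
    (I ^ (m + n)).mul_mem_right _ (↑u⁻¹ : R) (I.mul_sub_mul_comm_mem_pow hu hx)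

end TwoSidedIdeal

theorem stmt0 {R : Type*} [Ring R] (I : TwoSidedIdeal R) (k : ℕ)
    (u : Rˣ) (hu : (u : R) - 1 ∈ I ^ (k + 1))
    (x : R) (hx : x - 1 ∈ I ^ k) :
    (u : R) * x * (↑u⁻¹ : R) - x ∈ I ^ (2 * k + 1) := by
  rw [show 2 * k + 1 = k + 1 + k by omega]
  exact I.units_conj_sub_mem_pow hu hx
end

section
/- Let R be an associative unital (not necessarily commutative) ring and I a two-sided ideal of R, and let k ≥ 0 be an integer. If u is a unit of R with a := (u : R) − 1 ∈ I^(k+1), and x ∈ R satisfies h := x − 1 ∈ I^k, then u·x·u⁻¹ − x − (a·h − h·a) ∈ I^(2k+2). -/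
lemma my_pow_succ_def {R : Type*} [Ring R] (I : TwoSidedIdeal R) (n : ℕ) :
    I ^ (n + 1) = TwoSidedIdeal.span {x | ∃ a ∈ I, ∃ b ∈ I ^ n, x = a * b} := rfl

lemma my_mul_mem_pow {R : Type*} [Ring R] (I : TwoSidedIdeal R) :
    ∀ (m n : ℕ) (p q : R), p ∈ I ^ m → q ∈ I ^ n → p * q ∈ I ^ (m + n) := by
  intro m
  induction m with
  | zero =>
    intro n p q _ hq
    simpa using TwoSidedIdeal.mul_mem_left _ p q hq
  | succ m ih =>
    intro n p q hp hq
    rw [my_pow_succ_def] at hp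
    rw [TwoSidedIdeal.mem_span_iff] at hp
    set T : TwoSidedIdeal R := TwoSidedIdeal.mk'
      {p : R | ∀ q ∈ I ^ n, p * q ∈ I ^ (m + 1 + n)}
      (by intro q hq; simp)
      (by intro x y hx hy q hq; rw [add_mul]; exact TwoSidedIdeal.add_mem _ (hx q hq) (hy q hq))
      (by intro x hx q hq; rw [neg_mul]; exact TwoSidedIdeal.neg_mem _ (hx q hq))
      (by intro x y hy q hq; rw [mul_assoc]
          exact TwoSidedIdeal.mul_mem_left _ _ _ (hy q hq))
      (by intro x y hx q hq; rw [mul_assoc]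
          exact hx _ (TwoSidedIdeal.mul_mem_left _ _ _ hq)) with hT
    have hpT : p ∈ T := by
      apply hp
      rintro z ⟨a, haI, b, hb, rfl⟩
      rw [hT, SetLike.mem_coe, TwoSidedIdeal.mem_mk']
      intro q hq
      have hbq : b * q ∈ I ^ (m + n) := ih n b q hb hq
      have : a * b * q ∈ I ^ ((m + n) + 1) := by
        rw [my_pow_succ_def]
        apply TwoSidedIdeal.subset_span
        exact ⟨a, haI, b * q, hbq, mul_assoc a b q⟩
      convert this using 2
      omega
    rw [hT, TwoSidedIdeal.mem_mk'] at hpT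
    exact hpT q hq

theorem stmt1 {R : Type*} [Ring R] (I : TwoSidedIdeal R) (k : ℕ)
    (u : Rˣ) (a : R) (ha : a = (u : R) - 1) (hu : a ∈ I ^ (k + 1))
    (x : R) (h : R) (hh : h = x - 1) (hx : h ∈ I ^ k) :
    (u : R) * x * (↑u⁻¹ : R) - x - (a * h - h * a) ∈ I ^ (2 * k + 2) := by
  set a' : R := (↑u⁻¹ : R) - 1 with ha'
  have ha'mem : a' ∈ I ^ (k + 1) := by
    have : a' = -((↑u⁻¹ : R) * a) := by
      rw [ha, ha', mul_sub, mul_one]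
      have : (↑u⁻¹ : R) * (u : R) = 1 := u.inv_mul
      rw [this]; abel
    rw [this]
    exact TwoSidedIdeal.neg_mem _ (TwoSidedIdeal.mul_mem_left _ _ _ hu)
  have h0 : ((1 : R) + a) * (1 + a') = 1 := by
    rw [ha, ha']
    have : (u : R) * (↑u⁻¹ : R) = 1 := u.mul_inv
    simpa using this
  have key : (u : R) * x * (↑u⁻¹ : R) - x - (a * h - h * a) = (a * h - h * a) * a' := by
    have hu1 : (u : R) = 1 + a := by rw [ha]; abel
    have hi1 : (↑u⁻¹ : R) = 1 + a' := by rw [ha']; abel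
    have hx1 : x = 1 + h := by rw [hh]; abel
    rw [hu1, hi1, hx1]
    have expand : (1 + a) * (1 + h) * (1 + a') - (1 + h) - (a * h - h * a)
        - (a * h - h * a) * a' = (1 + h) * ((1 + a) * (1 + a') - 1) := by noncomm_ring
    have := expand
    rw [h0] at this
    simp only [sub_self, mul_zero] at this
    exact sub_eq_zero.mp this
  rw [key]
  have hah : a * h - h * a ∈ I ^ (k + 1) :=
    TwoSidedIdeal.sub_mem _ (TwoSidedIdeal.mul_mem_right _ _ _ hu)
      (TwoSidedIdeal.mul_mem_left _ _ _ hu)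
  have := my_mul_mem_pow I (k + 1) (k + 1) _ _ hah ha'mem
  convert this using 2
  omega
end

section
/- Let R be an associative unital (not necessarily commutative) ring and I a two-sided ideal of R, and let p, q ≥ 1 be integers. If u and v are units of R with a := (u : R) − 1 ∈ I^p and b := (v : R) − 1 ∈ I^q, then u⁻¹·v⁻¹·u·v − 1 − (a·b − b·a) ∈ I^(p+q+1). -/
section aux

variable {R : Type*} [Ring R] (I : TwoSidedIdeal R)

lemma pow_def (n : ℕ) : I ^ n = TwoSidedIdeal.npow I n := rfl

lemma pow_succ_def (n : ℕ) :
    I ^ (n + 1) = TwoSidedIdeal.span {x | ∃ a ∈ I, ∃ b ∈ I ^ n, x = a * b} := rfl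

lemma mem_pow_succ {x y : R} (n : ℕ) (hx : x ∈ I) (hy : y ∈ I ^ n) :
    x * y ∈ I ^ (n + 1) := by
  rw [pow_succ_def]
  exact TwoSidedIdeal.subset_span ⟨x, hx, y, hy, rfl⟩

lemma pow_le_self {n : ℕ} (hn : 1 ≤ n) {x : R} (hx : x ∈ I ^ n) : x ∈ I := by
  obtain ⟨m, rfl⟩ := Nat.exists_eq_add_of_le hn
  rw [add_comm, pow_succ_def, TwoSidedIdeal.mem_span_iff] at hx
  exact hx I (by rintro _ ⟨c, hc, d, _, rfl⟩; exact I.mul_mem_right _ _ hc)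

/-- key lemma: products on the right by elements of `I` raise the power. -/
lemma mul_mem_pow_succ : ∀ (n : ℕ) {x y : R}, x ∈ I ^ n → y ∈ I → x * y ∈ I ^ (n + 1) := by
  intro n
  induction n with
  | zero =>
    intro x y _ hy
    have h1 : y ∈ I ^ 1 := by
      rw [pow_succ_def]
      exact TwoSidedIdeal.subset_span ⟨y, hy, 1, trivial, (mul_one y).symm⟩
    exact (I ^ 1).mul_mem_left x y h1
  | succ n ih =>
    intro x y hx hy
    rw [pow_succ_def, TwoSidedIdeal.mem_span_iff] at hx
    let J : TwoSidedIdeal R := TwoSidedIdeal.mk'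
      {z | ∀ w ∈ I, z * w ∈ I ^ (n + 1 + 1)}
      (fun w _ => by simpa using (I ^ (n+1+1)).zero_mem)
      (fun h1 h2 w hw => by simp only [add_mul]; exact (I ^ (n+1+1)).add_mem (h1 w hw) (h2 w hw))
      (fun h1 w hw => by simpa [neg_mul] using (I ^ (n+1+1)).neg_mem (h1 w hw))
      (fun {r z} h1 w hw => by simpa [mul_assoc] using (I ^ (n+1+1)).mul_mem_left r _ (h1 w hw))
      (fun {z r} h1 w hw => by
        have := h1 (r * w) (I.mul_mem_left r w hw)
        simpa [mul_assoc] using this)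
    have hxJ : x ∈ J := hx J (by
      rintro _ ⟨c, hc, d, hd, rfl⟩
      rw [SetLike.mem_coe, TwoSidedIdeal.mem_mk']
      intro w hw
      have hdw : d * w ∈ I ^ (n + 1) := ih hd hw
      rw [mul_assoc]
      exact mem_pow_succ I (n+1) hc hdw)
    rw [TwoSidedIdeal.mem_mk'] at hxJ
    exact hxJ y hy

lemma mul_mem_pow : ∀ (q : ℕ) (p : ℕ) {x y : R}, x ∈ I ^ p → y ∈ I ^ q → x * y ∈ I ^ (p + q) := by
  intro q
  induction q with
  | zero => intro p x y hx _; exact (I ^ p).mul_mem_right _ _ hx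
  | succ n ih =>
    intro p x y hx hy
    rw [pow_succ_def, TwoSidedIdeal.mem_span_iff] at hy
    let J : TwoSidedIdeal R := TwoSidedIdeal.mk'
      {z | ∀ p : ℕ, ∀ w ∈ I ^ p, w * z ∈ I ^ (p + (n + 1))}
      (fun m w _ => by simpa using (I ^ (m + (n+1))).zero_mem)
      (fun h1 h2 m w hw => by
        simpa [mul_add] using (I ^ (m + (n+1))).add_mem (h1 m w hw) (h2 m w hw))
      (fun h1 m w hw => by simpa [mul_neg] using (I ^ (m + (n+1))).neg_mem (h1 m w hw))
      (fun {r z} h1 m w hw => by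
        have := h1 m (w * r) ((I ^ m).mul_mem_right _ _ hw)
        simpa [mul_assoc] using this)
      (fun {z r} h1 m w hw => by
        have := (I ^ (m + (n+1))).mul_mem_right _ r (h1 m w hw)
        simpa [mul_assoc] using this)
    have hyJ : y ∈ J := hy J (by
      rintro _ ⟨c, hc, d, hd, rfl⟩
      rw [SetLike.mem_coe, TwoSidedIdeal.mem_mk']
      intro m w hw
      have h1 : w * c ∈ I ^ (m + 1) := mul_mem_pow_succ I m hw hc
      have h2 : (w * c) * d ∈ I ^ (m + 1 + n) := ih (m + 1) h1 hd
      have : m + 1 + n = m + (n + 1) := by omega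
      rw [← mul_assoc, ← this]
      exact h2)
    rw [TwoSidedIdeal.mem_mk'] at hyJ
    exact hyJ p x hx

end aux

theorem stmt2 {R : Type*} [Ring R] (I : TwoSidedIdeal R) (p q : ℕ) (hp : 1 ≤ p) (hq : 1 ≤ q)
    (u v : Rˣ) (a b : R) (ha : a = (u : R) - 1) (hb : b = (v : R) - 1)
    (hu : a ∈ I ^ p) (hv : b ∈ I ^ q) :
    (↑u⁻¹ : R) * (↑v⁻¹ : R) * (u : R) * (v : R) - 1 - (a * b - b * a) ∈ I ^ (p + q + 1) := by
  have haI : a ∈ I := pow_le_self I hp hu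
  have hbI : b ∈ I := pow_le_self I hq hv
  -- the inverse deviations lie in I
  have hA : (↑u⁻¹ : R) - 1 ∈ I := by
    have h0 : a * ↑u⁻¹ = 1 - ↑u⁻¹ := by rw [ha, sub_mul, one_mul, u.mul_inv]
    have : (↑u⁻¹ : R) - 1 = -(a * ↑u⁻¹) := by rw [h0, neg_sub]
    rw [this]
    exact I.neg_mem (I.mul_mem_right _ _ haI)
  have hB : (↑v⁻¹ : R) - 1 ∈ I := by
    have h0 : b * ↑v⁻¹ = 1 - ↑v⁻¹ := by rw [hb, sub_mul, one_mul, v.mul_inv]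
    have : (↑v⁻¹ : R) - 1 = -(b * ↑v⁻¹) := by rw [h0, neg_sub]
    rw [this]
    exact I.neg_mem (I.mul_mem_right _ _ hbI)
  have hw : (↑u⁻¹ : R) * ↑v⁻¹ - 1 ∈ I := by
    have : (↑u⁻¹ : R) * ↑v⁻¹ - 1 = ((↑u⁻¹ : R) - 1) * ↑v⁻¹ + ((↑v⁻¹ : R) - 1) := by
      noncomm_ring
    rw [this]
    exact I.add_mem (I.mul_mem_right _ _ hA) hB
  -- the key algebraic identity
  have hcomm : a * b - b * a = (u : R) * v - (v : R) * u := by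
    rw [ha, hb]; noncomm_ring
  have key : (↑u⁻¹ : R) * (↑v⁻¹ : R) * (u : R) * (v : R) - 1 - (a * b - b * a)
      = ((↑u⁻¹ : R) * ↑v⁻¹ - 1) * (a * b - b * a) := by
    rw [hcomm]
    have h3 : (↑u⁻¹ : R) * ↑v⁻¹ * ((u : R) * v - (v : R) * u)
        = (↑u⁻¹ : R) * ↑v⁻¹ * u * v - 1 := by
      have e : (↑u⁻¹ : R) * ↑v⁻¹ * ((u : R) * v - (v : R) * u)
          = (↑u⁻¹ : R) * ↑v⁻¹ * u * v - ↑u⁻¹ * (↑v⁻¹ * v) * u := by noncomm_ring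
      rw [e, v.inv_mul, mul_one, u.inv_mul]
    rw [sub_mul, one_mul, h3]
  rw [key]
  have hab : a * b ∈ I ^ (p + q) := mul_mem_pow I q p hu hv
  have hba : b * a ∈ I ^ (p + q) := by
    have := mul_mem_pow I p q hv hu
    rwa [add_comm q p] at this
  exact mem_pow_succ I (p + q) hw ((I ^ (p + q)).sub_mem hab hba)
end

section
/- Let σ be a type, R an associative unital (not necessarily commutative) ring, I a two-sided ideal of R, and k ≥ 0 an integer. Let x, y : σ → R satisfy x s ∈ I, y s ∈ I, and x s − y s ∈ I^(k+1) for every s ∈ σ. Let φ, ψ : A → R be the ring homomorphisms from the free associative unital ℤ-algebra A on σ determined by φ(ι s) = x s and ψ(ι s) = y s, and let J be the two-sided ideal of A generated by the image of ι. Then for every m ≥ 1 and every f ∈ J^m, one has φ f − ψ f ∈ I^(m+k). -/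
section Aux

variable {R : Type*} [Ring R]

lemma aux_span_induction {s : Set R} {P : R → Prop} (h0 : P 0)
    (hadd : ∀ {x y}, P x → P y → P (x + y)) (hneg : ∀ {x}, P x → P (-x))
    (hl : ∀ {x y}, P y → P (x * y)) (hr : ∀ {x y}, P x → P (x * y))
    (hs : ∀ x ∈ s, P x) {x : R} (hx : x ∈ TwoSidedIdeal.span s) : P x := by
  have := TwoSidedIdeal.mem_span_iff.mp hx
    (TwoSidedIdeal.mk' {x | P x} h0 hadd hneg hl hr)
    (fun y hy => (TwoSidedIdeal.mem_mk' _ _ _ _ _ _ y).mpr (hs y hy))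
  rwa [TwoSidedIdeal.mem_mk'] at this

lemma aux_pow_succ (I : TwoSidedIdeal R) (n : ℕ) :
    I ^ (n + 1) = TwoSidedIdeal.span {x | ∃ a ∈ I, ∃ b ∈ I ^ n, x = a * b} := rfl

lemma aux_mul_mem_pow (I : TwoSidedIdeal R) {a b : R} {n : ℕ} (ha : a ∈ I) (hb : b ∈ I ^ n) :
    a * b ∈ I ^ (n + 1) := by
  rw [aux_pow_succ]
  exact TwoSidedIdeal.subset_span ⟨a, ha, b, hb, rfl⟩

lemma aux_pow_mul_mem (I : TwoSidedIdeal R) :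
    ∀ (p : ℕ) {q : ℕ} {u v : R}, u ∈ I ^ p → v ∈ I ^ q → u * v ∈ I ^ (p + q)
  | 0, q, u, v, _, hv => by simpa using (I ^ q).mul_mem_left u v hv
  | p + 1, q, u, v, hu, hv => by
    rw [aux_pow_succ] at hu
    have key : ∀ w ∈ I ^ q, u * w ∈ I ^ (p + 1 + q) := by
      refine aux_span_induction
        (P := fun u => ∀ w ∈ I ^ q, u * w ∈ I ^ (p + 1 + q)) ?_ ?_ ?_ ?_ ?_ ?_ hu
      · intro w hw; simpa using (I ^ (p + 1 + q)).zero_mem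
      · intro x y hx hy w hw
        simpa [add_mul] using (I ^ (p + 1 + q)).add_mem (hx w hw) (hy w hw)
      · intro x hx w hw
        simpa [neg_mul] using (I ^ (p + 1 + q)).neg_mem (hx w hw)
      · intro x y hy w hw
        simpa [mul_assoc] using (I ^ (p + 1 + q)).mul_mem_left x _ (hy w hw)
      · intro x y hx w hw
        have : y * w ∈ I ^ q := (I ^ q).mul_mem_left y w hw
        simpa [mul_assoc] using hx _ this
      · rintro _ ⟨a, ha, b, hb, rfl⟩ w hw
        have : b * w ∈ I ^ (p + q) := aux_pow_mul_mem I p hb hw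
        have h2 : a * (b * w) ∈ I ^ (p + q + 1) := aux_mul_mem_pow I ha this
        have he : p + q + 1 = p + 1 + q := by omega
        rw [he] at h2
        simpa [mul_assoc] using h2
    exact key v hv

lemma aux_pow_succ_le (I : TwoSidedIdeal R) (n : ℕ) : I ^ (n + 1) ≤ I ^ n := by
  intro x hx
  rw [aux_pow_succ] at hx
  refine aux_span_induction ?_ ?_ ?_ ?_ ?_ ?_ hx
  · exact (I ^ n).zero_mem
  · exact fun hx hy => (I ^ n).add_mem hx hy
  · exact fun hx => (I ^ n).neg_mem hx
  · exact fun hy => (I ^ n).mul_mem_left _ _ hy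
  · exact fun hx => (I ^ n).mul_mem_right _ _ hx
  · rintro _ ⟨a, ha, b, hb, rfl⟩
    exact (I ^ n).mul_mem_left a b hb

lemma aux_pow_le_pow (I : TwoSidedIdeal R) {p q : ℕ} (h : p ≤ q) : I ^ q ≤ I ^ p := by
  induction q with
  | zero => simpa [Nat.le_zero.mp h] using le_refl _
  | succ n ih =>
    rcases Nat.lt_or_ge p (n + 1) with h' | h'
    · exact le_trans (aux_pow_succ_le I n) (ih (Nat.lt_succ_iff.mp h'))
    · have : p = n + 1 := le_antisymm h h'
      subst this; exact le_refl _

lemma aux_pow_one (I : TwoSidedIdeal R) : I ^ 1 = I := by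
  apply le_antisymm
  · intro x hx
    rw [aux_pow_succ] at hx
    refine aux_span_induction ?_ ?_ ?_ ?_ ?_ ?_ hx
    · exact I.zero_mem
    · exact fun hx hy => I.add_mem hx hy
    · exact fun hx => I.neg_mem hx
    · exact fun hy => I.mul_mem_left _ _ hy
    · exact fun hx => I.mul_mem_right _ _ hx
    · rintro _ ⟨a, ha, b, _, rfl⟩
      exact I.mul_mem_right a b ha
  · intro x hx
    have : x = x * 1 := (mul_one x).symm
    rw [this]
    exact aux_mul_mem_pow I hx (by trivial)

end Aux

theorem stmt7 {σ R : Type*} [Ring R] (I : TwoSidedIdeal R) (k : ℕ)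
    (x y : σ → R) (hx : ∀ s, x s ∈ I) (hy : ∀ s, y s ∈ I)
    (hxy : ∀ s, x s - y s ∈ I ^ (k + 1))
    (J : TwoSidedIdeal (FreeAlgebra ℤ σ))
    (hJ : J = TwoSidedIdeal.span (Set.range (FreeAlgebra.ι ℤ : σ → FreeAlgebra ℤ σ)))
    (φ ψ : FreeAlgebra ℤ σ →+* R)
    (hφ : ∀ s, φ (FreeAlgebra.ι ℤ s) = x s) (hψ : ∀ s, ψ (FreeAlgebra.ι ℤ s) = y s) :
    ∀ m : ℕ, 1 ≤ m → ∀ f ∈ J ^ m, φ f - ψ f ∈ I ^ (m + k) := by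
  -- product difference identity
  have hdiff : ∀ a b : FreeAlgebra ℤ σ,
      φ (a * b) - ψ (a * b) = φ a * (φ b - ψ b) + (φ a - ψ a) * ψ b := by
    intro a b
    rw [map_mul, map_mul, mul_sub, sub_mul]
    abel
  -- Claim A: for every element f, φ f - ψ f ∈ I ^ (k+1)
  have claimA : ∀ f : FreeAlgebra ℤ σ, φ f - ψ f ∈ I ^ (k + 1) := by
    intro f
    induction f using FreeAlgebra.induction with
    | grade0 r =>
      have h1 : φ (algebraMap ℤ (FreeAlgebra ℤ σ) r) = (r : R) := by
        simp [algebraMap_int_eq, map_intCast]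
      have h2 : ψ (algebraMap ℤ (FreeAlgebra ℤ σ) r) = (r : R) := by
        simp [algebraMap_int_eq, map_intCast]
      rw [h1, h2, sub_self]
      exact (I ^ (k + 1)).zero_mem
    | grade1 s => rw [hφ, hψ]; exact hxy s
    | mul a b ha hb =>
      rw [hdiff]
      exact (I ^ (k + 1)).add_mem ((I ^ (k + 1)).mul_mem_left _ _ hb)
        ((I ^ (k + 1)).mul_mem_right _ _ ha)
    | add a b ha hb =>
      have : φ (a + b) - ψ (a + b) = (φ a - ψ a) + (φ b - ψ b) := by
        rw [map_add, map_add]; abel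
      rw [this]
      exact (I ^ (k + 1)).add_mem ha hb
  -- Claim C: for f ∈ J, φ f ∈ I, ψ f ∈ I, φ f - ψ f ∈ I ^ (k+1)
  have claimC : ∀ f ∈ J, φ f ∈ I ∧ ψ f ∈ I ∧ φ f - ψ f ∈ I ^ (k + 1) := by
    intro f hf
    rw [hJ] at hf
    refine aux_span_induction
      (P := fun f => φ f ∈ I ∧ ψ f ∈ I ∧ φ f - ψ f ∈ I ^ (k + 1)) ?_ ?_ ?_ ?_ ?_ ?_ hf
    · simp
    · intro a b ha hb
      refine ⟨by rw [map_add]; exact I.add_mem ha.1 hb.1,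
        by rw [map_add]; exact I.add_mem ha.2.1 hb.2.1, ?_⟩
      have : φ (a + b) - ψ (a + b) = (φ a - ψ a) + (φ b - ψ b) := by
        rw [map_add, map_add]; abel
      rw [this]; exact (I ^ (k + 1)).add_mem ha.2.2 hb.2.2
    · intro a ha
      refine ⟨by rw [map_neg]; exact I.neg_mem ha.1,
        by rw [map_neg]; exact I.neg_mem ha.2.1, ?_⟩
      have : φ (-a) - ψ (-a) = -(φ a - ψ a) := by rw [map_neg, map_neg]; abel
      rw [this]; exact (I ^ (k + 1)).neg_mem ha.2.2
    · intro a b hb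
      refine ⟨by rw [map_mul]; exact I.mul_mem_left _ _ hb.1,
        by rw [map_mul]; exact I.mul_mem_left _ _ hb.2.1, ?_⟩
      rw [hdiff]
      exact (I ^ (k + 1)).add_mem ((I ^ (k + 1)).mul_mem_left _ _ hb.2.2)
        ((I ^ (k + 1)).mul_mem_right _ _ (claimA a))
    · intro a b ha
      refine ⟨by rw [map_mul]; exact I.mul_mem_right _ _ ha.1,
        by rw [map_mul]; exact I.mul_mem_right _ _ ha.2.1, ?_⟩
      rw [hdiff]
      exact (I ^ (k + 1)).add_mem ((I ^ (k + 1)).mul_mem_left _ _ (claimA b))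
        ((I ^ (k + 1)).mul_mem_right _ _ ha.2.2)
    · rintro _ ⟨s, rfl⟩
      exact ⟨by rw [hφ]; exact hx s, by rw [hψ]; exact hy s, by rw [hφ, hψ]; exact hxy s⟩
  -- Main claim by induction on m
  have main : ∀ m : ℕ, ∀ f ∈ J ^ (m + 1),
      φ f ∈ I ^ (m + 1) ∧ ψ f ∈ I ^ (m + 1) ∧ φ f - ψ f ∈ I ^ (m + 1 + k) := by
    intro m
    induction m with
    | zero =>
      intro f hf
      rw [aux_pow_one] at hf
      obtain ⟨h1, h2, h3⟩ := claimC f hf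
      rw [aux_pow_one I]
      refine ⟨h1, h2, ?_⟩
      have he : 0 + 1 + k = k + 1 := by omega
      rw [he]; exact h3
    | succ n ih =>
      intro f hf
      rw [aux_pow_succ] at hf
      refine aux_span_induction
        (P := fun f => φ f ∈ I ^ (n + 1 + 1) ∧ ψ f ∈ I ^ (n + 1 + 1) ∧
          φ f - ψ f ∈ I ^ (n + 1 + 1 + k)) ?_ ?_ ?_ ?_ ?_ ?_ hf
      · simp
      · intro a b ha hb
        refine ⟨by rw [map_add]; exact (I ^ (n + 2)).add_mem ha.1 hb.1,
          by rw [map_add]; exact (I ^ (n + 2)).add_mem ha.2.1 hb.2.1, ?_⟩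
        have : φ (a + b) - ψ (a + b) = (φ a - ψ a) + (φ b - ψ b) := by
          rw [map_add, map_add]; abel
        rw [this]; exact (I ^ (n + 2 + k)).add_mem ha.2.2 hb.2.2
      · intro a ha
        refine ⟨by rw [map_neg]; exact (I ^ (n + 2)).neg_mem ha.1,
          by rw [map_neg]; exact (I ^ (n + 2)).neg_mem ha.2.1, ?_⟩
        have : φ (-a) - ψ (-a) = -(φ a - ψ a) := by rw [map_neg, map_neg]; abel
        rw [this]; exact (I ^ (n + 2 + k)).neg_mem ha.2.2
      · intro a b hb
        refine ⟨by rw [map_mul]; exact (I ^ (n + 2)).mul_mem_left _ _ hb.1,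
          by rw [map_mul]; exact (I ^ (n + 2)).mul_mem_left _ _ hb.2.1, ?_⟩
        rw [hdiff]
        refine (I ^ (n + 2 + k)).add_mem ((I ^ (n + 2 + k)).mul_mem_left _ _ hb.2.2) ?_
        have h1 : (φ a - ψ a) * ψ b ∈ I ^ (k + 1 + (n + 2)) :=
          aux_pow_mul_mem I (k + 1) (claimA a) hb.2.1
        exact aux_pow_le_pow I (by omega) h1
      · intro a b ha
        refine ⟨by rw [map_mul]; exact (I ^ (n + 2)).mul_mem_right _ _ ha.1,
          by rw [map_mul]; exact (I ^ (n + 2)).mul_mem_right _ _ ha.2.1, ?_⟩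
        rw [hdiff]
        refine (I ^ (n + 2 + k)).add_mem ?_ ((I ^ (n + 2 + k)).mul_mem_right _ _ ha.2.2)
        have h1 : φ a * (φ b - ψ b) ∈ I ^ (n + 2 + (k + 1)) :=
          aux_pow_mul_mem I (n + 2) ha.1 (claimA b)
        exact aux_pow_le_pow I (by omega) h1
      · rintro _ ⟨a, ha, b, hb, rfl⟩
        obtain ⟨ha1, ha2, ha3⟩ := claimC a ha
        obtain ⟨hb1, hb2, hb3⟩ := ih b hb
        refine ⟨by rw [map_mul]; exact aux_mul_mem_pow I ha1 hb1,
          by rw [map_mul]; exact aux_mul_mem_pow I ha2 hb2, ?_⟩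
        rw [hdiff]
        refine (I ^ (n + 2 + k)).add_mem ?_ ?_
        · have h1 : φ a * (φ b - ψ b) ∈ I ^ (n + 1 + k + 1) := aux_mul_mem_pow I ha1 hb3
          have he : n + 1 + k + 1 = n + 2 + k := by omega
          rwa [he] at h1
        · have h1 : (φ a - ψ a) * ψ b ∈ I ^ (k + 1 + (n + 1)) :=
            aux_pow_mul_mem I (k + 1) ha3 hb2
          have he : k + 1 + (n + 1) = n + 2 + k := by omega
          rwa [he] at h1
  intro m hm f hf
  obtain ⟨n, rfl⟩ := Nat.exists_eq_add_of_le hm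
  have h := (main n f (by rwa [Nat.add_comm 1 n] at hf)).2.2
  have he : 1 + n + k = n + 1 + k := by omega
  rw [he]; exact h
end

section
/- Let σ be a type and A the free associative unital ℤ-algebra on σ, whose elements are written uniquely as finite ℤ-linear combinations of words (products ι(s₁)⋯ι(s_m) of generators, with the empty word giving 1); write coeff_w(f) ∈ ℤ for the coefficient of the word w in f. Let q ≥ 0 be an integer and d a function assigning an integer to each word over σ such that d(w) divides d(v) whenever v is a subsequence (not necessarily contiguous sublist) of w. Then the set D = { f ∈ A | for every word w of length < q, d(w) divides coeff_w(f) } is a two-sided ideal of A. -/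
/-! A coefficient of `x * y` is a sum of products `coeff_u(x) * coeff_v(y)` over the splittings
`u ++ v = w`, and both `u` and `v` are subsequences of `w`. Hence if `x` (or `y`) satisfies the
divisibility conditions on a subsequence-closed set of words, so does `x * y`. -/

/-- The coefficient of the word `w` in an element `f` of the free associative unital
`ℤ`-algebra on `σ`, via the canonical identification with the monoid algebra of the
free monoid on `σ`. -/
noncomputable def FreeAlgebra.wordCoeff {σ : Type*} (f : FreeAlgebra ℤ σ) (w : List σ) : ℤ :=
  (FreeAlgebra.equivMonoidAlgebraFreeMonoid f).coeff (FreeMonoid.ofList w)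

namespace FreeAlgebra

variable {σ : Type*}

@[simp]
lemma wordCoeff_zero (w : List σ) : wordCoeff (0 : FreeAlgebra ℤ σ) w = 0 := by
  simp [wordCoeff]

@[simp]
lemma wordCoeff_add (f g : FreeAlgebra ℤ σ) (w : List σ) :
    wordCoeff (f + g) w = wordCoeff f w + wordCoeff g w := by
  simp [wordCoeff]

@[simp]
lemma wordCoeff_neg (f : FreeAlgebra ℤ σ) (w : List σ) : wordCoeff (-f) w = -wordCoeff f w := by
  simp [wordCoeff]

lemma dvd_wordCoeff_mul {n : ℤ} {x y : FreeAlgebra ℤ σ} {w : List σ}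
    (h : ∀ u v : List σ, u ++ v = w → n ∣ wordCoeff x u * wordCoeff y v) :
    n ∣ wordCoeff (x * y) w := by
  classical
  rw [wordCoeff, map_mul, MonoidAlgebra.coeff_mul]
  refine Finset.dvd_sum fun a _ => Finset.dvd_sum fun b _ => ?_
  dsimp only
  split_ifs with hab
  · exact h a.toList b.toList (by simpa using congrArg FreeMonoid.toList hab)
  · exact dvd_zero _

def coeffDvdIdeal (P : List σ → Prop) (hP : ∀ v w : List σ, v.Sublist w → P w → P v)
    (d : List σ → ℤ) (hd : ∀ v w : List σ, v.Sublist w → d w ∣ d v) :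
    TwoSidedIdeal (FreeAlgebra ℤ σ) :=
  have mem_sublist {f : FreeAlgebra ℤ σ} (hf : ∀ w, P w → d w ∣ wordCoeff f w) {v w : List σ}
      (hvw : v.Sublist w) (hw : P w) : d w ∣ wordCoeff f v :=
    (hd v w hvw).trans (hf v (hP v w hvw hw))
  TwoSidedIdeal.mk' {f | ∀ w, P w → d w ∣ wordCoeff f w}
    (fun w _ => by simp)
    (fun hx hy w hw => by simpa using dvd_add (hx w hw) (hy w hw))
    (fun hx w hw => by simpa using (hx w hw).neg_right)
    (fun hy w hw => dvd_wordCoeff_mul fun u v huv =>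
      (mem_sublist hy (huv ▸ List.sublist_append_right u v) hw).mul_left _)
    (fun hx w hw => dvd_wordCoeff_mul fun u v huv =>
      (mem_sublist hx (huv ▸ List.sublist_append_left u v) hw).mul_right _)

lemma mem_coeffDvdIdeal {P : List σ → Prop} {hP : ∀ v w : List σ, v.Sublist w → P w → P v}
    {d : List σ → ℤ} {hd : ∀ v w : List σ, v.Sublist w → d w ∣ d v} {f : FreeAlgebra ℤ σ} :
    f ∈ coeffDvdIdeal P hP d hd ↔ ∀ w, P w → d w ∣ wordCoeff f w := by
  rw [coeffDvdIdeal, TwoSidedIdeal.mem_mk']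
  rfl

end FreeAlgebra

theorem stmt9 {σ : Type*} (q : ℕ) (d : List σ → ℤ)
    (hd : ∀ v w : List σ, v.Sublist w → d w ∣ d v) :
    ∃ D : TwoSidedIdeal (FreeAlgebra ℤ σ),
      ∀ f : FreeAlgebra ℤ σ,
        f ∈ D ↔ ∀ w : List σ, w.length < q → d w ∣ FreeAlgebra.wordCoeff f w :=
  ⟨FreeAlgebra.coeffDvdIdeal (·.length < q) (fun _ _ hvw hw => hvw.length_le.trans_lt hw) d hd,
    fun _ => FreeAlgebra.mem_coeffDvdIdeal⟩
end
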